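/- arXiv:1303.4201 — 2 statements merged into one kernel-verified Lean document; each statement's English description precedes it below -/
import Mathlib

section
/- Let M = ν·B(α,n) where B(α,n) is the Basic Mixing Matrix, ν > 0, α > -1, and let G = γ·Id with γ > 0. Then the solution of dI/dt = (M - G)I with initial condition I(0) = I₀·e_i (the i-th standard basis vector scaled by I₀ > 0) is I(t) = (I₀/n)·e^{λt}·(v₁ - e^{-(λ - λ̃)t}·v_i), where λ = ν(n+α) - γ and λ̃ = να - γ, v₁ is the all-ones vector and v_i has entries 1 except 1-n in position i. -/
/-!
The all-ones vector `v₁` and `vᵢ = v₁ - n eᵢ` are eigenvectors of `B(α,n)` with eigenvalues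
`n + α` and `α` (the entries of `vᵢ` sum to zero), hence of `νB - γ Id` with eigenvalues `λ` and
`λ̃`. So `s ↦ e^{λ s} v₁` and `s ↦ e^{λ̃ s} vᵢ` solve the system, and so does their difference
scaled by `I₀/n`, which starts at `(I₀/n)(v₁ - vᵢ) = I₀ eᵢ`.
-/

/-- The Basic Mixing Matrix: off-diagonal entries 1, diagonal entries 1+α. -/
def basicMixingMatrix (α : ℝ) (n : ℕ) : Matrix (Fin n) (Fin n) ℝ :=
  fun i j => if i = j then 1 + α else 1

/-- The claimed solution of the linearized epidemic:
I(t) = (I₀/n) e^{λ t} (v₁ - e^{-(λ - λ̃) t} vᵢ). -/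
noncomputable def claimedSolution (ν α γ I₀ : ℝ) (n : ℕ) (i : Fin n) :
    ℝ → (Fin n → ℝ) :=
  fun t => (I₀ / n) • (Real.exp ((ν * (n + α) - γ) * t) •
    ((fun _ : Fin n => (1 : ℝ)) -
      Real.exp (-(((ν * (n + α) - γ) - (ν * α - γ))) * t) •
        (fun j : Fin n => if j = i then 1 - (n : ℝ) else 1)))

open Matrix

section LinearODE

variable {ι : Type*} [Fintype ι]

theorem sub_smul_one_mulVec_of_mulVec_eq_smul [DecidableEq ι] {A : Matrix ι ι ℝ}
    {v : ι → ℝ} {μ : ℝ} (h : A *ᵥ v = μ • v) (ν γ : ℝ) :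
    (ν • A - γ • (1 : Matrix ι ι ℝ)) *ᵥ v = (ν * μ - γ) • v := by
  rw [sub_mulVec, smul_mulVec, smul_mulVec, h, one_mulVec, smul_smul, sub_smul]

theorem hasDerivAt_exp_mul_smul_of_mulVec_eq_smul {A : Matrix ι ι ℝ} {v : ι → ℝ} {μ : ℝ}
    (h : A *ᵥ v = μ • v) (t : ℝ) :
    HasDerivAt (fun s => Real.exp (μ * s) • v) (A *ᵥ (Real.exp (μ * t) • v)) t := by
  have hexp : HasDerivAt (fun s => Real.exp (μ * s)) (Real.exp (μ * t) * μ) t := by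
    simpa using ((hasDerivAt_id t).const_mul μ).exp
  rw [mulVec_smul, h, smul_smul]
  exact hexp.smul_const v

end LinearODE

theorem basicMixingMatrix_eq (α : ℝ) (n : ℕ) :
    basicMixingMatrix α n = α • 1 + Matrix.of fun _ _ => 1 := by
  ext j k
  by_cases h : j = k <;> simp [basicMixingMatrix, one_apply, h, add_comm]

theorem basicMixingMatrix_mulVec (α : ℝ) (n : ℕ) (v : Fin n → ℝ) :
    basicMixingMatrix α n *ᵥ v = α • v + fun _ => ∑ k, v k := by
  rw [basicMixingMatrix_eq, add_mulVec, smul_mulVec, one_mulVec]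
  ext j
  simp [mulVec, dotProduct]

theorem basicMixingMatrix_mulVec_one (α : ℝ) (n : ℕ) :
    basicMixingMatrix α n *ᵥ 1 = ((n : ℝ) + α) • 1 := by
  ext j
  simp [basicMixingMatrix_mulVec, add_comm]

/-- The paper's `vᵢ`. -/
def localizedMode (n : ℕ) (i : Fin n) : Fin n → ℝ := fun j => if j = i then 1 - (n : ℝ) else 1

theorem one_sub_localizedMode (n : ℕ) (i : Fin n) :
    1 - localizedMode n i = (n : ℝ) • Pi.single i 1 := by
  ext j
  by_cases h : j = i <;> simp [localizedMode, h]

theorem sum_localizedMode (n : ℕ) (i : Fin n) : ∑ j, localizedMode n i j = 0 := by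
  rw [← sub_sub_cancel 1 (localizedMode n i), one_sub_localizedMode]
  simp [Finset.sum_sub_distrib, Pi.single_apply]

theorem basicMixingMatrix_mulVec_localizedMode (α : ℝ) (n : ℕ) (i : Fin n) :
    basicMixingMatrix α n *ᵥ localizedMode n i = α • localizedMode n i := by
  rw [basicMixingMatrix_mulVec, sum_localizedMode]
  exact add_zero _

theorem claimedSolution_eq_eigenmodes (ν α γ I₀ : ℝ) (n : ℕ) (i : Fin n) :
    claimedSolution ν α γ I₀ n i = fun t => (I₀ / n) •
      (Real.exp ((ν * (n + α) - γ) * t) • 1 - Real.exp ((ν * α - γ) * t) • localizedMode n i) := by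
  funext t
  simp only [claimedSolution, smul_sub, smul_smul, ← Real.exp_add]
  congr 4
  ring

theorem claimedSolution_solves_ODE_general (ν α γ I₀ : ℝ) (n : ℕ) (i : Fin n) :
    claimedSolution ν α γ I₀ n i 0 = I₀ • (Pi.single i 1 : Fin n → ℝ) ∧
    ∀ (t : ℝ) (j : Fin n),
      HasDerivAt (fun s => claimedSolution ν α γ I₀ n i s j)
        (((ν • basicMixingMatrix α n - γ • (1 : Matrix (Fin n) (Fin n) ℝ)).mulVec
          (claimedSolution ν α γ I₀ n i t)) j) t := by
  have hn : (n : ℝ) ≠ 0 := Nat.cast_ne_zero.mpr i.pos.ne'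
  refine ⟨?_, fun t => hasDerivAt_pi.mp ?_⟩
  · rw [claimedSolution_eq_eigenmodes]
    simp only [mul_zero, Real.exp_zero, one_smul, one_sub_localizedMode, smul_smul,
      div_mul_cancel₀ _ hn]
  · have hflat := hasDerivAt_exp_mul_smul_of_mulVec_eq_smul
      (sub_smul_one_mulVec_of_mulVec_eq_smul (basicMixingMatrix_mulVec_one α n) ν γ) t
    have hlocal := hasDerivAt_exp_mul_smul_of_mulVec_eq_smul
      (sub_smul_one_mulVec_of_mulVec_eq_smul (basicMixingMatrix_mulVec_localizedMode α n i) ν γ) t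
    rw [claimedSolution_eq_eigenmodes, mulVec_smul, mulVec_sub]
    exact (hflat.sub hlocal).const_smul (I₀ / n)

theorem claimedSolution_solves_ODE (ν α γ I₀ : ℝ) (n : ℕ) (i : Fin n)
    (hν : ν > 0) (hα : α > -1) (hγ : γ > 0) (hI₀ : I₀ > 0) (hn : 1 ≤ n) :
    claimedSolution ν α γ I₀ n i 0 = I₀ • (Pi.single i 1 : Fin n → ℝ) ∧
    ∀ (t : ℝ) (j : Fin n),
      HasDerivAt (fun s => claimedSolution ν α γ I₀ n i s j)
        (((ν • basicMixingMatrix α n - γ • (1 : Matrix (Fin n) (Fin n) ℝ)).mulVec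
          (claimedSolution ν α γ I₀ n i t)) j) t :=
  claimedSolution_solves_ODE_general ν α γ I₀ n i
end

section
/- Define f(ν, α, γ, R₀) = ((R₀-1)/R₀)·exp((R₀-1)/((να/γ) - R₀)) for ν, α, γ > 0 and R₀ > 1 with να/γ < R₀. Then, holding the other variables fixed, f is strictly decreasing in ν, strictly decreasing in α, and strictly increasing in γ. -/
/-!
Writing `x = ν α / γ`, the threshold is `((R₀ - 1) / R₀) · exp ((R₀ - 1) / (x - R₀))`. On `x < R₀`
the exponent is a positive constant over a negative, increasing denominator, so the threshold is
strictly decreasing in `x`; and `x` increases with `ν` and `α` and decreases with `γ`.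
-/

/-- The initial-infection threshold for separation of timescales. -/
noncomputable def thresholdF (ν α γ R₀ : ℝ) : ℝ :=
  ((R₀ - 1) / R₀) * Real.exp ((R₀ - 1) / (ν * α / γ - R₀))

open Set

lemma strictAntiOn_div_sub {c R : ℝ} (hc : 0 < c) :
    StrictAntiOn (fun x => c / (x - R)) (Iio R) := by
  intro x _ y hy hxy
  have hyR : y - R < 0 := sub_neg.mpr hy
  simpa only [mul_one_div] using
    mul_lt_mul_of_pos_left (one_div_lt_one_div_of_neg_of_lt hyR (by linarith)) hc

lemma strictAntiOn_thresholdF_profile {R₀ : ℝ} (hR : 1 < R₀) :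
    StrictAntiOn (fun x => ((R₀ - 1) / R₀) * Real.exp ((R₀ - 1) / (x - R₀))) (Iio R₀) := by
  have hprefactor : 0 < (R₀ - 1) / R₀ := div_pos (by linarith) (by linarith)
  intro x hx y hy hxy
  exact mul_lt_mul_of_pos_left
    (Real.exp_lt_exp.mpr (strictAntiOn_div_sub (by linarith) hx hy hxy)) hprefactor

lemma thresholdF_lt_thresholdF {ν α γ ν' α' γ' R₀ : ℝ} (hR : 1 < R₀)
    (hlt : ν * α / γ < ν' * α' / γ') (hR' : ν' * α' / γ' < R₀) :
    thresholdF ν' α' γ' R₀ < thresholdF ν α γ R₀ :=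
  strictAntiOn_thresholdF_profile hR (hlt.trans hR') hR' hlt

theorem thresholdF_monotonicity :
    (∀ ν₁ ν₂ α γ R₀ : ℝ, 0 < ν₁ → 0 < ν₂ → 0 < α → 0 < γ → 1 < R₀ →
      ν₁ * α / γ < R₀ → ν₂ * α / γ < R₀ → ν₁ < ν₂ →
      thresholdF ν₂ α γ R₀ < thresholdF ν₁ α γ R₀) ∧
    (∀ ν α₁ α₂ γ R₀ : ℝ, 0 < ν → 0 < α₁ → 0 < α₂ → 0 < γ → 1 < R₀ →
      ν * α₁ / γ < R₀ → ν * α₂ / γ < R₀ → α₁ < α₂ →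
      thresholdF ν α₂ γ R₀ < thresholdF ν α₁ γ R₀) ∧
    (∀ ν α γ₁ γ₂ R₀ : ℝ, 0 < ν → 0 < α → 0 < γ₁ → 0 < γ₂ → 1 < R₀ →
      ν * α / γ₁ < R₀ → ν * α / γ₂ < R₀ → γ₁ < γ₂ →
      thresholdF ν α γ₁ R₀ < thresholdF ν α γ₂ R₀) := by
  refine ⟨?_, ?_, ?_⟩
  · intro ν₁ ν₂ α γ R₀ _ _ hα hγ hR _ hx₂ hν
    exact thresholdF_lt_thresholdF hR
      (div_lt_div_of_pos_right (mul_lt_mul_of_pos_right hν hα) hγ) hx₂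
  · intro ν α₁ α₂ γ R₀ hν _ _ hγ hR _ hx₂ hα
    exact thresholdF_lt_thresholdF hR
      (div_lt_div_of_pos_right (mul_lt_mul_of_pos_left hα hν) hγ) hx₂
  · intro ν α γ₁ γ₂ R₀ hν hα hγ₁ _ hR hx₁ _ hγ
    exact thresholdF_lt_thresholdF hR
      (div_lt_div_of_pos_left (mul_pos hν hα) hγ₁ hγ) hx₁
end
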